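/- For any nonnegative concave function h : ℕ → ℝ (in particular h(y) = min{y, N}) and independent Bernoulli random variables X_v, the function S ↦ E[h(Σ_{v∈S} X_v)] is submodular. -/
import Mathlib


/-- Expectation of `h` applied to the number of successes among independent Bernoulli
trials with success probabilities `p v`, `v ∈ S`. -/
noncomputable def expTrunc {ι : Type*} [DecidableEq ι] (p : ι → ℝ) (S : Finset ι)
    (h : ℕ → ℝ) : ℝ :=
  ∑ T ∈ S.powerset, ((∏ v ∈ T, p v) * ∏ v ∈ S \ T, (1 - p v)) * h T.card

section aux
variable {ι : Type*} [DecidableEq ι] (p : ι → ℝ)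

lemma expTrunc_insert (f : ℕ → ℝ) {v : ι} {S : Finset ι} (hv : v ∉ S) :
    expTrunc p (insert v S) f
      = p v * expTrunc p S (fun n => f (n + 1)) + (1 - p v) * expTrunc p S f := by
  have hA : ∑ T ∈ S.powerset, ((∏ w ∈ T, p w) * ∏ w ∈ insert v S \ T, (1 - p w)) * f T.card
      = (1 - p v) * expTrunc p S f := by
    unfold expTrunc
    rw [Finset.mul_sum]
    apply Finset.sum_congr rfl
    intro T hT
    have hTS : T ⊆ S := Finset.mem_powerset.mp hT
    have hvT : v ∉ T := fun hx => hv (hTS hx)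
    rw [Finset.insert_sdiff_of_notMem _ hvT, Finset.prod_insert (by simp [hv])]
    ring
  have hB : ∑ T ∈ S.powerset,
        ((∏ w ∈ insert v T, p w) * ∏ w ∈ insert v S \ insert v T, (1 - p w)) * f (insert v T).card
      = p v * expTrunc p S (fun n => f (n + 1)) := by
    unfold expTrunc
    rw [Finset.mul_sum]
    apply Finset.sum_congr rfl
    intro T hT
    have hTS : T ⊆ S := Finset.mem_powerset.mp hT
    have hvT : v ∉ T := fun hx => hv (hTS hx)
    rw [Finset.insert_sdiff_insert, Finset.sdiff_insert_of_notMem hv,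
      Finset.prod_insert hvT, Finset.card_insert_of_notMem hvT]
    ring
  conv_lhs => unfold expTrunc
  rw [Finset.sum_powerset_insert hv, hA, hB]
  ring

lemma expTrunc_le (hp : ∀ v, 0 ≤ p v ∧ p v ≤ 1) {f g : ℕ → ℝ} (S : Finset ι)
    (hfg : ∀ n, f n ≤ g n) : expTrunc p S f ≤ expTrunc p S g := by
  unfold expTrunc
  apply Finset.sum_le_sum
  intro T _
  have hw : 0 ≤ (∏ v ∈ T, p v) * ∏ v ∈ S \ T, (1 - p v) :=
    mul_nonneg (Finset.prod_nonneg fun v _ => (hp v).1)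
      (Finset.prod_nonneg fun v _ => by linarith [(hp v).2])
  exact mul_le_mul_of_nonneg_left (hfg T.card) hw

lemma expTrunc_insert_le (hp : ∀ v, 0 ≤ p v ∧ p v ≤ 1) {f : ℕ → ℝ}
    (hf : ∀ n, f (n + 1) ≤ f n) {v : ι} {S : Finset ι} (hv : v ∉ S) :
    expTrunc p (insert v S) f ≤ expTrunc p S f := by
  rw [expTrunc_insert p f hv]
  have h1 : expTrunc p S (fun n => f (n + 1)) ≤ expTrunc p S f :=
    expTrunc_le p hp S hf
  nlinarith [(hp v).1, (hp v).2]

lemma expTrunc_union_le (hp : ∀ v, 0 ≤ p v ∧ p v ≤ 1) {f : ℕ → ℝ}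
    (hf : ∀ n, f (n + 1) ≤ f n) (S : Finset ι) :
    ∀ U : Finset ι, Disjoint S U → expTrunc p (S ∪ U) f ≤ expTrunc p S f := by
  intro U
  induction U using Finset.induction_on with
  | empty => simp
  | @insert a U ha ih =>
    intro hdisj
    have hdU : Disjoint S U := hdisj.mono_right (Finset.subset_insert a U)
    have haS : a ∉ S := fun hx => (Finset.disjoint_left.mp hdisj) hx (Finset.mem_insert_self a U)
    have haSU : a ∉ S ∪ U := by
      simp only [Finset.mem_union]; rintro (hx | hx)
      · exact haS hx
      · exact ha hx
    rw [Finset.union_insert]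
    exact le_trans (expTrunc_insert_le p hp hf haSU) (ih hdU)

lemma expTrunc_sub (S : Finset ι) (f g : ℕ → ℝ) :
    expTrunc p S (fun n => f n - g n) = expTrunc p S f - expTrunc p S g := by
  unfold expTrunc
  rw [← Finset.sum_sub_distrib]
  apply Finset.sum_congr rfl
  intro T _
  ring

end aux

/-- for any nonnegative, nondecreasing, discretely concave `h : ℕ → ℝ`
(in particular `h(y) = min{y, N}`) and independent Bernoulli variables `X_v`, the set
function `S ↦ E[h(∑_{v∈S} X_v)]` is submodular. -/
theorem expectation_concave_submodular {ι : Type*} [DecidableEq ι] (V : Finset ι)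
    (p : ι → ℝ) (hp : ∀ v, 0 ≤ p v ∧ p v ≤ 1)
    (h : ℕ → ℝ) (hnonneg : ∀ y, 0 ≤ h y)
    (hmono : ∀ y, h y ≤ h (y + 1))
    (hconc : ∀ y : ℕ, h (y + 2) - h (y + 1) ≤ h (y + 1) - h y)
    (g : Finset ι → ℝ) (hg : ∀ S : Finset ι, g S = expTrunc p S h) :
    ∀ X Y : Finset ι, X ⊆ Y → Y ⊆ V → ∀ v ∈ V, v ∉ Y →
      g (insert v Y) - g Y ≤ g (insert v X) - g X := by
  intro X Y hXY hYV v hvV hvY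
  set Δ : ℕ → ℝ := fun n => h (n + 1) - h n with hΔ
  have hΔdec : ∀ n, Δ (n + 1) ≤ Δ n := fun n => hconc n
  have key : ∀ S : Finset ι, v ∉ S →
      g (insert v S) - g S = p v * expTrunc p S Δ := by
    intro S hvS
    rw [hg, hg, expTrunc_insert p h hvS, hΔ, expTrunc_sub]
    ring
  have hvX : v ∉ X := fun hx => hvY (hXY hx)
  rw [key Y hvY, key X hvX]
  apply mul_le_mul_of_nonneg_left _ (hp v).1
  have : Y = X ∪ (Y \ X) := by rw [Finset.union_sdiff_of_subset hXY]
  rw [this]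
  exact expTrunc_union_le p hp hΔdec X (Y \ X) (Finset.disjoint_sdiff)
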